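/- arXiv:0811.2514 — 3 statements merged into one kernel-verified Lean document; each statement's English description precedes it below -/
import Mathlib

section
/- Let G₁ and G₂ be finite simple graphs on finite vertex sets V₁ and V₂, let G be their disjoint union on V₁ ⊕ V₂, and let k be a field. Under the canonical bijection k^{E(G)} ≅ k^{E(G₁)} × k^{E(G₂)} (coming from the identification E(G) ≅ E(G₁) ⊕ E(G₂)), the complement of the affine graph hypersurface of G is identified with the product of the complements: k^{E(G)} ∖ X̂_G corresponds exactly to (k^{E(G₁)} ∖ X̂_{G₁}) × (k^{E(G₂)} ∖ X̂_{G₂}). -/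
open scoped Classical
noncomputable section

open MvPolynomial

/-- A spanning forest of a simple graph `G`: a subset of the edge set that is maximal
among subsets of the edge set whose associated spanning subgraph is acyclic. -/
def SimpleGraph.IsSpanningForest {V : Type*} (G : SimpleGraph V) (T : Set (Sym2 V)) : Prop :=
  T ⊆ G.edgeSet ∧ (SimpleGraph.fromEdgeSet T).IsAcyclic ∧
    ∀ T' : Set (Sym2 V), T ⊆ T' → T' ⊆ G.edgeSet →
      (SimpleGraph.fromEdgeSet T').IsAcyclic → T' = T

/-- The Kirchhoff–Symanzik polynomial of a finite simple graph `G`: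
`Ψ_G = ∑_T ∏_{e ∉ T} x_e`, the sum over spanning forests `T` of `G`. -/
def SimpleGraph.kirchhoff {V : Type*} [Fintype V] (G : SimpleGraph V) :
    MvPolynomial G.edgeSet ℤ :=
  ∑ T ∈ Finset.univ.filter (fun T : Finset (Sym2 V) => G.IsSpanningForest ↑T),
    ∏ e ∈ Finset.univ.filter (fun e : G.edgeSet => (e : Sym2 V) ∉ T), X e

/-- The affine graph hypersurface `X̂_G ⊆ k^{E(G)}`. -/
def SimpleGraph.graphHypersurface {V : Type*} [Fintype V] (G : SimpleGraph V)
    (k : Type*) [CommRing k] : Set (G.edgeSet → k) :=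
  {t | (MvPolynomial.aeval t) G.kirchhoff = 0}

/-- The complement `k^{E(G)} ∖ X̂_G` of the affine graph hypersurface. -/
def SimpleGraph.graphHypersurfaceComplement {V : Type*} [Fintype V] (G : SimpleGraph V)
    (k : Type*) [CommRing k] : Set (G.edgeSet → k) :=
  {t | (MvPolynomial.aeval t) G.kirchhoff ≠ 0}

/-- The disjoint union of two simple graphs. -/
def SimpleGraph.disjUnion {V₁ V₂ : Type*} (G₁ : SimpleGraph V₁) (G₂ : SimpleGraph V₂) :
    SimpleGraph (V₁ ⊕ V₂) where
  Adj x y := (∃ a b, x = Sum.inl a ∧ y = Sum.inl b ∧ G₁.Adj a b) ∨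
             (∃ a b, x = Sum.inr a ∧ y = Sum.inr b ∧ G₂.Adj a b)
  symm := by
    constructor
    rintro x y (⟨a, b, rfl, rfl, h⟩ | ⟨a, b, rfl, rfl, h⟩)
    · exact Or.inl ⟨b, a, rfl, rfl, h.symm⟩
    · exact Or.inr ⟨b, a, rfl, rfl, h.symm⟩
  loopless := by
    constructor
    rintro x (⟨a, b, rfl, hab, h⟩ | ⟨a, b, rfl, hab, h⟩) <;>
      · cases hab
        exact (h.ne rfl).elim

lemma SimpleGraph.disjUnion_mem_inl {V₁ V₂ : Type*} {G₁ : SimpleGraph V₁}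
    {G₂ : SimpleGraph V₂} {e : Sym2 V₁} (he : e ∈ G₁.edgeSet) :
    e.map Sum.inl ∈ (G₁.disjUnion G₂).edgeSet := by
  induction e using Sym2.ind with
  | _ a b => exact Or.inl ⟨a, b, rfl, rfl, he⟩

lemma SimpleGraph.disjUnion_mem_inr {V₁ V₂ : Type*} {G₁ : SimpleGraph V₁}
    {G₂ : SimpleGraph V₂} {e : Sym2 V₂} (he : e ∈ G₂.edgeSet) :
    e.map Sum.inr ∈ (G₁.disjUnion G₂).edgeSet := by
  induction e using Sym2.ind with
  | _ a b => exact Or.inr ⟨a, b, rfl, rfl, he⟩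

/-- The canonical inclusion `E(G₁) ↪ E(G₁ ⊔ G₂)`. -/
def SimpleGraph.disjUnionEdgeInl {V₁ V₂ : Type*} (G₁ : SimpleGraph V₁) (G₂ : SimpleGraph V₂) :
    G₁.edgeSet → (G₁.disjUnion G₂).edgeSet :=
  fun e => ⟨(e : Sym2 V₁).map Sum.inl, SimpleGraph.disjUnion_mem_inl e.2⟩

/-- The canonical inclusion `E(G₂) ↪ E(G₁ ⊔ G₂)`. -/
def SimpleGraph.disjUnionEdgeInr {V₁ V₂ : Type*} (G₁ : SimpleGraph V₁) (G₂ : SimpleGraph V₂) :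
    G₂.edgeSet → (G₁.disjUnion G₂).edgeSet :=
  fun e => ⟨(e : Sym2 V₂).map Sum.inr, SimpleGraph.disjUnion_mem_inr e.2⟩

/-!
A spanning forest of `G₁ ⊔ G₂` is exactly a union `T₁ ⊔ T₂` of spanning forests of the two
pieces: a cycle never leaves the component it starts in, so acyclicity splits, and maximality
among acyclic edge sets splits along the order isomorphism between edge sets of `G₁ ⊔ G₂` and
pairs of edge sets. Hence `Ψ_{G₁ ⊔ G₂} = Ψ_{G₁} · Ψ_{G₂}` in disjoint sets of variables, and a
product in a field is nonzero exactly when both factors are.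
-/

lemma maximal_prodMk_iff {α β : Type*} [Preorder α] [Preorder β] {P : α → Prop} {Q : β → Prop}
    {a : α} {b : β} : Maximal (fun p : α × β => P p.1 ∧ Q p.2) (a, b) ↔ Maximal P a ∧ Maximal Q b :=
  ⟨fun h => ⟨⟨h.prop.1, fun x hx hax => (h.2 (y := (x, b)) ⟨hx, h.prop.2⟩ ⟨hax, le_rfl⟩).1⟩,
      ⟨h.prop.2, fun y hy hby => (h.2 (y := (a, y)) ⟨h.prop.1, hy⟩ ⟨le_rfl, hby⟩).2⟩⟩,
    fun ⟨ha, hb⟩ => ⟨⟨ha.prop, hb.prop⟩, fun _ hp hle => ⟨ha.2 hp.1 hle.1, hb.2 hp.2 hle.2⟩⟩⟩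

namespace SimpleGraph

section Sum

variable {V W : Type*} {G : SimpleGraph V} {H : SimpleGraph W}

lemma Adj.isLeft_eq_of_sum {x y : V ⊕ W} (h : (G ⊕g H).Adj x y) : x.isLeft = y.isLeft := by
  cases x <;> cases y <;> simp_all

lemma Walk.isLeft_eq_of_mem_support_of_sum {x y z : V ⊕ W} (p : (G ⊕g H).Walk x y)
    (hz : z ∈ p.support) : z.isLeft = x.isLeft := by
  induction p with
  | nil => rw [Walk.support_nil, List.mem_singleton] at hz; rw [hz]
  | cons h p ih =>
    rw [Walk.support_cons, List.mem_cons] at hz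
    rcases hz with rfl | hz
    · rfl
    · rw [ih hz, h.isLeft_eq_of_sum]

lemma isAcyclic_sum_iff : (G ⊕g H).IsAcyclic ↔ G.IsAcyclic ∧ H.IsAcyclic := by
  refine ⟨fun h => ⟨h.embedding Embedding.sumInl, h.embedding Embedding.sumInr⟩, ?_⟩
  rintro ⟨hG, hH⟩ v c hc
  have no_cycle_within {s : Set (V ⊕ W)} (hs : ∀ x ∈ c.support, x ∈ s)
      (hacyc : ((G ⊕g H).induce s).IsAcyclic) : False := by
    refine hacyc (c.induce s hs) ?_
    rwa [← Walk.isCycle_map_iff_of_injective (f := (Embedding.induce s).toHom)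
      Subtype.val_injective, Walk.map_induce]
  cases v with
  | inl a =>
    refine no_cycle_within (s := Set.range Sum.inl) (fun x hx => ?_)
      (Embedding.sumInl.isoInduceRange.isAcyclic_iff.mp hG)
    simpa [Set.range_inl] using c.isLeft_eq_of_mem_support_of_sum hx
  | inr b =>
    refine no_cycle_within (s := Set.range Sum.inr) (fun x hx => ?_)
      (Embedding.sumInr.isoInduceRange.isAcyclic_iff.mp hH)
    simpa [Set.range_inr] using c.isLeft_eq_of_mem_support_of_sum hx

end Sum

section SumEdges

variable {V W : Type*}

def sumEdges (S : Set (Sym2 V)) (T : Set (Sym2 W)) : Set (Sym2 (V ⊕ W)) :=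
  Sym2.map Sum.inl '' S ∪ Sym2.map Sum.inr '' T

lemma _root_.Sym2.map_inl_ne_map_inr (e : Sym2 V) (f : Sym2 W) :
    e.map (Sum.inl : V → V ⊕ W) ≠ f.map Sum.inr := by
  induction e using Sym2.ind
  induction f using Sym2.ind
  simp

lemma preimage_inl_sumEdges (S : Set (Sym2 V)) (T : Set (Sym2 W)) :
    Sym2.map Sum.inl ⁻¹' sumEdges S T = S := by
  ext e
  simp [sumEdges, (Sym2.map.injective Sum.inl_injective).eq_iff, eq_comm (b := Sym2.map _ e),
    Sym2.map_inl_ne_map_inr]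

lemma preimage_inr_sumEdges (S : Set (Sym2 V)) (T : Set (Sym2 W)) :
    Sym2.map Sum.inr ⁻¹' sumEdges S T = T := by
  ext e
  simp [sumEdges, (Sym2.map.injective Sum.inr_injective).eq_iff, eq_comm (b := Sym2.map _ e),
    (Sym2.map_inl_ne_map_inr _ _).symm]

lemma map_inl_mem_sumEdges {S : Set (Sym2 V)} {T : Set (Sym2 W)} {e : Sym2 V} :
    e.map Sum.inl ∈ sumEdges S T ↔ e ∈ S :=
  Set.ext_iff.mp (preimage_inl_sumEdges S T) e

lemma map_inr_mem_sumEdges {S : Set (Sym2 V)} {T : Set (Sym2 W)} {e : Sym2 W} :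
    e.map Sum.inr ∈ sumEdges S T ↔ e ∈ T :=
  Set.ext_iff.mp (preimage_inr_sumEdges S T) e

lemma mk_inl_inr_notMem_sumEdges (S : Set (Sym2 V)) (T : Set (Sym2 W)) (a : V) (b : W) :
    s(Sum.inl a, Sum.inr b) ∉ sumEdges S T := by
  rintro (⟨e, -, he⟩ | ⟨e, -, he⟩)
  · have : Sum.inr b ∈ e.map Sum.inl := he ▸ Sym2.mem_mk_right _ _
    simp at this
  · have : Sum.inl a ∈ e.map Sum.inr := he ▸ Sym2.mem_mk_left _ _
    simp at this

lemma sumEdges_preimage_of_subset {U : Set (Sym2 (V ⊕ W))} {S : Set (Sym2 V)} {T : Set (Sym2 W)}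
    (hU : U ⊆ sumEdges S T) : sumEdges (Sym2.map Sum.inl ⁻¹' U) (Sym2.map Sum.inr ⁻¹' U) = U := by
  refine subset_antisymm (by simp [sumEdges]) fun e he => ?_
  rcases hU he with ⟨e, -, rfl⟩ | ⟨e, -, rfl⟩
  · exact .inl ⟨e, he, rfl⟩
  · exact .inr ⟨e, he, rfl⟩

lemma sumEdges_subset_sumEdges_iff {S S' : Set (Sym2 V)} {T T' : Set (Sym2 W)} :
    sumEdges S T ⊆ sumEdges S' T' ↔ S ⊆ S' ∧ T ⊆ T' := by
  refine ⟨fun h => ⟨?_, ?_⟩, fun h => Set.union_subset_union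
    (Set.image_mono h.1) (Set.image_mono h.2)⟩
  · simpa only [preimage_inl_sumEdges] using Set.preimage_mono (f := Sym2.map Sum.inl) h
  · simpa only [preimage_inr_sumEdges] using Set.preimage_mono (f := Sym2.map Sum.inr) h

def sumEdgesEmbedding : Set (Sym2 V) × Set (Sym2 W) ↪o Set (Sym2 (V ⊕ W)) :=
  OrderEmbedding.ofMapLEIff (fun p => sumEdges p.1 p.2) fun _ _ => sumEdges_subset_sumEdges_iff

lemma sumEdgesEmbedding_apply (p : Set (Sym2 V) × Set (Sym2 W)) :
    sumEdgesEmbedding p = sumEdges p.1 p.2 := rfl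

lemma mem_range_sumEdgesEmbedding_of_subset {U : Set (Sym2 (V ⊕ W))} {S : Set (Sym2 V)}
    {T : Set (Sym2 W)} (hU : U ⊆ sumEdges S T) : U ∈ Set.range sumEdgesEmbedding :=
  ⟨(_, _), sumEdges_preimage_of_subset hU⟩

lemma edgeSet_sum (G : SimpleGraph V) (H : SimpleGraph W) :
    (G ⊕g H).edgeSet = sumEdges G.edgeSet H.edgeSet := by
  ext e
  induction e using Sym2.ind with
  | _ x y =>
    cases x <;> cases y
    · rw [mem_edgeSet, sum_adj_inl, ← Sym2.map_mk, map_inl_mem_sumEdges, mem_edgeSet]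
    · simpa using mk_inl_inr_notMem_sumEdges _ _ _ _
    · simpa [Sym2.eq_swap] using mk_inl_inr_notMem_sumEdges _ _ _ _
    · rw [mem_edgeSet, sum_adj_inr, ← Sym2.map_mk, map_inr_mem_sumEdges, mem_edgeSet]

lemma fromEdgeSet_sumEdges (S : Set (Sym2 V)) (T : Set (Sym2 W)) :
    fromEdgeSet (sumEdges S T) = fromEdgeSet S ⊕g fromEdgeSet T := by
  ext x y
  cases x <;> cases y
  · rw [fromEdgeSet_adj, ← Sym2.map_mk, map_inl_mem_sumEdges]
    simp
  · simpa using mk_inl_inr_notMem_sumEdges _ _ _ _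
  · simpa [Sym2.eq_swap] using mk_inl_inr_notMem_sumEdges _ _ _ _
  · rw [fromEdgeSet_adj, ← Sym2.map_mk, map_inr_mem_sumEdges]
    simp

end SumEdges

section SpanningForest

variable {V W : Type*}

lemma isSpanningForest_iff_maximal {G : SimpleGraph V} {T : Set (Sym2 V)} :
    G.IsSpanningForest T ↔ Maximal (fun T => T ⊆ G.edgeSet ∧ (fromEdgeSet T).IsAcyclic) T := by
  simp only [maximal_subset_iff, IsSpanningForest, and_assoc]
  exact and_congr_right fun _ => and_congr_right fun _ =>
    forall_congr' fun T' => ⟨fun h hT' hle => (h hle hT'.1 hT'.2).symm,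
      fun h hle hsub hacyc => (h ⟨hsub, hacyc⟩ hle).symm⟩

lemma isSpanningForest_sum_sumEdges_iff {G : SimpleGraph V} {H : SimpleGraph W}
    {S : Set (Sym2 V)} {T : Set (Sym2 W)} :
    (G ⊕g H).IsSpanningForest (sumEdges S T) ↔ G.IsSpanningForest S ∧ H.IsSpanningForest T := by
  have hrange : {U | U ⊆ (G ⊕g H).edgeSet ∧ (fromEdgeSet U).IsAcyclic} ⊆
      Set.range sumEdgesEmbedding := fun U hU =>
    mem_range_sumEdgesEmbedding_of_subset (hU.1.trans (edgeSet_sum G H).le)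
  simp only [isSpanningForest_iff_maximal]
  refine (sumEdgesEmbedding.maximal_apply_mem_iff hrange (x := (S, T))).trans ?_
  simp only [Set.mem_ofPred_eq, sumEdgesEmbedding_apply, edgeSet_sum, fromEdgeSet_sumEdges,
    sumEdges_subset_sumEdges_iff, isAcyclic_sum_iff, and_and_and_comm]
  exact maximal_prodMk_iff (P := fun S' => S' ⊆ G.edgeSet ∧ (fromEdgeSet S').IsAcyclic)
    (Q := fun T' => T' ⊆ H.edgeSet ∧ (fromEdgeSet T').IsAcyclic)

end SpanningForest

section DisjUnion

variable {V₁ V₂ : Type*}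

lemma disjUnion_eq_sum (G₁ : SimpleGraph V₁) (G₂ : SimpleGraph V₂) :
    G₁.disjUnion G₂ = G₁ ⊕g G₂ := by
  ext x y
  cases x <;> cases y <;> simp [disjUnion]

lemma edgeSet_disjUnion (G₁ : SimpleGraph V₁) (G₂ : SimpleGraph V₂) :
    (G₁.disjUnion G₂).edgeSet = sumEdges G₁.edgeSet G₂.edgeSet := by
  rw [disjUnion_eq_sum, edgeSet_sum]

def disjUnionEdgeEquiv (G₁ : SimpleGraph V₁) (G₂ : SimpleGraph V₂) :
    G₁.edgeSet ⊕ G₂.edgeSet ≃ (G₁.disjUnion G₂).edgeSet :=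
  .ofBijective (Sum.elim (G₁.disjUnionEdgeInl G₂) (G₁.disjUnionEdgeInr G₂)) <| by
    refine ⟨?_, fun e => ?_⟩
    · refine Function.Injective.sumElim ?_ ?_ fun e f h => ?_
      · exact fun e f h => Subtype.ext <| Sym2.map.injective Sum.inl_injective <|
          congrArg Subtype.val h
      · exact fun e f h => Subtype.ext <| Sym2.map.injective Sum.inr_injective <|
          congrArg Subtype.val h
      · exact Sym2.map_inl_ne_map_inr e.1 f.1 (congrArg Subtype.val h)
    · rcases (edgeSet_disjUnion G₁ G₂).le e.2 with ⟨e, he, hee⟩ | ⟨e, he, hee⟩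
      · exact ⟨.inl ⟨e, he⟩, Subtype.ext hee⟩
      · exact ⟨.inr ⟨e, he⟩, Subtype.ext hee⟩

end DisjUnion

section Kirchhoff

variable {V₁ V₂ : Type*} [Fintype V₁] [Fintype V₂]

lemma prod_X_notMem_disjUnion (R : Type*) [CommSemiring R] {G₁ : SimpleGraph V₁}
    {G₂ : SimpleGraph V₂} {T₁ : Finset (Sym2 V₁)} {T₂ : Finset (Sym2 V₂)}
    {U : Finset (Sym2 (V₁ ⊕ V₂))} (hU : (U : Set (Sym2 (V₁ ⊕ V₂))) = sumEdges ↑T₁ ↑T₂) :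
    ∏ e ∈ Finset.univ.filter (fun e : (G₁.disjUnion G₂).edgeSet => (e : Sym2 _) ∉ U),
        (X e : MvPolynomial _ R) =
      rename (G₁.disjUnionEdgeInl G₂)
          (∏ e ∈ Finset.univ.filter (fun e : G₁.edgeSet => (e : Sym2 V₁) ∉ T₁), X e) *
        rename (G₁.disjUnionEdgeInr G₂)
          (∏ e ∈ Finset.univ.filter (fun e : G₂.edgeSet => (e : Sym2 V₂) ∉ T₂), X e) := by
  have mem_inl (e : G₁.edgeSet) :
      (disjUnionEdgeEquiv G₁ G₂ (.inl e) : Sym2 (V₁ ⊕ V₂)) ∈ U ↔ (e : Sym2 V₁) ∈ T₁ := by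
    rw [← Finset.mem_coe, hU, ← Finset.mem_coe]
    exact map_inl_mem_sumEdges
  have mem_inr (e : G₂.edgeSet) :
      (disjUnionEdgeEquiv G₁ G₂ (.inr e) : Sym2 (V₁ ⊕ V₂)) ∈ U ↔ (e : Sym2 V₂) ∈ T₂ := by
    rw [← Finset.mem_coe, hU, ← Finset.mem_coe]
    exact map_inr_mem_sumEdges
  rw [map_prod, map_prod]
  simp only [rename_X, Finset.prod_filter]
  rw [← (disjUnionEdgeEquiv G₁ G₂).prod_comp, Fintype.prod_sum_type]
  simp only [mem_inl, mem_inr]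
  rfl

lemma kirchhoff_disjUnion (G₁ : SimpleGraph V₁) (G₂ : SimpleGraph V₂) :
    (G₁.disjUnion G₂).kirchhoff = rename (G₁.disjUnionEdgeInl G₂) G₁.kirchhoff *
      rename (G₁.disjUnionEdgeInr G₂) G₂.kirchhoff := by
  have decompose {U : Finset (Sym2 (V₁ ⊕ V₂))} (hU : (G₁.disjUnion G₂).IsSpanningForest ↑U) :
      (U : Set (Sym2 (V₁ ⊕ V₂))) =
        sumEdges ↑(U.preimage (Sym2.map Sum.inl) (Sym2.map.injective Sum.inl_injective).injOn)
          ↑(U.preimage (Sym2.map Sum.inr) (Sym2.map.injective Sum.inr_injective).injOn) := by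
    rw [Finset.coe_preimage, Finset.coe_preimage,
      sumEdges_preimage_of_subset (hU.1.trans (edgeSet_disjUnion G₁ G₂).le)]
  have coe_union (p : Finset (Sym2 V₁) × Finset (Sym2 V₂)) :
      ((p.1.image (Sym2.map Sum.inl) ∪ p.2.image (Sym2.map Sum.inr) : Finset _) :
        Set (Sym2 (V₁ ⊕ V₂))) = sumEdges ↑p.1 ↑p.2 := by
    simp [sumEdges]
  simp only [kirchhoff, map_sum, Finset.sum_mul_sum, ← Finset.sum_product']
  refine Finset.sum_nbij'
    (fun U => (U.preimage _ (Sym2.map.injective Sum.inl_injective).injOn,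
      U.preimage _ (Sym2.map.injective Sum.inr_injective).injOn))
    (fun p => p.1.image (Sym2.map Sum.inl) ∪ p.2.image (Sym2.map Sum.inr)) ?_ ?_ ?_ ?_ ?_
  · intro U hU
    rw [Finset.mem_filter_univ] at hU
    simp only [Finset.mem_product, Finset.mem_filter_univ]
    rw [← isSpanningForest_sum_sumEdges_iff, ← disjUnion_eq_sum, ← decompose hU]
    exact hU
  · intro p hp
    simp only [Finset.mem_product, Finset.mem_filter_univ] at hp
    rw [Finset.mem_filter_univ, coe_union, disjUnion_eq_sum]
    exact isSpanningForest_sum_sumEdges_iff.mpr hp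
  · intro U hU
    rw [Finset.mem_filter_univ] at hU
    exact Finset.coe_injective ((coe_union _).trans (decompose hU).symm)
  · intro p _
    ext : 1 <;> apply Finset.coe_injective <;> simp only [Finset.coe_preimage, coe_union]
    · exact preimage_inl_sumEdges _ _
    · exact preimage_inr_sumEdges _ _
  · intro U hU
    rw [Finset.mem_filter_univ] at hU
    -- `convert` bridges the two classical `DecidableEq (Sym2 (V₁ ⊕ V₂))` instances in play
    convert prod_X_notMem_disjUnion ℤ (decompose hU)

end Kirchhoff

end SimpleGraph

/-- Under the canonical bijection `k^{E(G)} ≅ k^{E(G₁)} × k^{E(G₂)}`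
(coming from the identification `E(G) ≅ E(G₁) ⊕ E(G₂)` of the edge set of the disjoint
union `G = G₁ ⊔ G₂`), the complement of the affine graph hypersurface of `G` is identified
with the product of the complements. -/
theorem graphHypersurfaceComplement_disjUnion {V₁ V₂ : Type*} [Fintype V₁] [Fintype V₂]
    (G₁ : SimpleGraph V₁) (G₂ : SimpleGraph V₂) (k : Type*) [Field k] :
    Function.Bijective
      (fun t : (G₁.disjUnion G₂).edgeSet → k =>
        (t ∘ G₁.disjUnionEdgeInl G₂, t ∘ G₁.disjUnionEdgeInr G₂)) ∧
    ∀ t : (G₁.disjUnion G₂).edgeSet → k,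
      t ∈ (G₁.disjUnion G₂).graphHypersurfaceComplement k ↔
        (t ∘ G₁.disjUnionEdgeInl G₂ ∈ G₁.graphHypersurfaceComplement k ∧
         t ∘ G₁.disjUnionEdgeInr G₂ ∈ G₂.graphHypersurfaceComplement k) := by
  refine ⟨?_, fun t => ?_⟩
  · exact (((G₁.disjUnionEdgeEquiv G₂).arrowCongr (.refl k)).symm.trans
      (Equiv.sumArrowEquivProdArrow _ _ k)).bijective
  · simp only [SimpleGraph.graphHypersurfaceComplement, Set.mem_ofPred_eq,
      SimpleGraph.kirchhoff_disjUnion, map_mul, aeval_rename, mul_ne_zero_iff]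
end
end

section
/- Let G be a finite simple graph and let e ∈ E(G) be a bridge of G (an edge whose deletion increases the number of connected components; equivalently, an edge lying on no cycle). Then: (a) every spanning forest of G contains e; (b) the polynomial Ψ_G does not involve the variable x_e, and Ψ_G equals the image of Ψ_{G'} under the variable renaming induced by the inclusion E(G') = E(G) ∖ {e} ↪ E(G), where G' is the graph G with the edge e deleted; and (c) for any field k there is a bijection k^{E(G)} ∖ X̂_G ≃ k × (k^{E(G')} ∖ X̂_{G'}). (This is the statement that for a graph Γ that is not 1PI, the universal invariant has the form U(Γ) = [𝔸¹]·B.) -/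
open scoped Classical
noncomputable section

open MvPolynomial

/-- The canonical inclusion `E(G ∖ s) → E(G)` of the edge set of the graph with the
edges in `s` deleted. -/
def SimpleGraph.deleteEdgesInc {V : Type*} (G : SimpleGraph V) (s : Set (Sym2 V)) :
    (G.deleteEdges s).edgeSet → G.edgeSet :=
  fun f => ⟨(f : Sym2 V),
    SimpleGraph.edgeSet_mono (SimpleGraph.deleteEdges_le s) f.2⟩

/-! A bridge lies on no cycle, so adding it to an acyclic edge set keeps the set acyclic.
Hence every spanning forest of `G` contains `e`, and `T ↦ T ∖ {e}` is a bijection from the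
spanning forests of `G` onto those of `G ∖ e` that preserves the complementary edge sets
`E(G) ∖ T = E(G ∖ e) ∖ (T ∖ {e})`. So `Ψ_G` is `Ψ_{G ∖ e}` with renamed variables and does not
involve `x_e`; the nonvanishing locus of such a polynomial is `k` times the nonvanishing locus
of `Ψ_{G ∖ e}`. -/

section

variable {R σ τ : Type*} (k : Type*) {i : τ → σ} (hi : Function.Injective i) {a : σ}
  (hrange : Set.range i = {a}ᶜ)

def Equiv.funSplitAtOfRangeEqCompl : (σ → k) ≃ k × (τ → k) :=
  (Equiv.funSplitAt a k).trans <| Equiv.prodCongr (Equiv.refl k) <|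
    Equiv.arrowCongr ((Equiv.ofInjective i hi).trans (Equiv.setCongr hrange)).symm
      (Equiv.refl k)

lemma Equiv.funSplitAtOfRangeEqCompl_apply (t : σ → k) :
    Equiv.funSplitAtOfRangeEqCompl k hi hrange t = (t a, t ∘ i) :=
  rfl

variable [CommSemiring R] [CommSemiring k] [Algebra R k]

def MvPolynomial.renameNonvanishingEquiv (q : MvPolynomial τ R) :
    {t : σ → k // aeval t (rename i q) ≠ 0} ≃ k × {u : τ → k // aeval u q ≠ 0} :=
  let E : (σ → k) ≃ (τ → k) × k :=
    (Equiv.funSplitAtOfRangeEqCompl k hi hrange).trans (Equiv.prodComm k (τ → k))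
  have hE (t : σ → k) : aeval t (rename i q) ≠ 0 ↔ aeval (E t).1 q ≠ 0 := by
    rw [aeval_rename]; rfl
  (E.subtypeEquiv hE).trans <|
    Equiv.prodSubtypeFstEquivSubtypeProd.trans (Equiv.prodComm _ _)

end

namespace SimpleGraph

variable {V : Type*} {G : SimpleGraph V} {e : Sym2 V}

lemma deleteEdgesInc_injective (s : Set (Sym2 V)) : Function.Injective (G.deleteEdgesInc s) :=
  fun _ _ h => Subtype.ext (congrArg (fun f : G.edgeSet => (f : Sym2 V)) h)

lemma range_deleteEdgesInc_singleton (he : e ∈ G.edgeSet) :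
    Set.range (G.deleteEdgesInc {e}) = {⟨e, he⟩}ᶜ := by
  ext f
  simp [deleteEdgesInc, edgeSet_deleteEdges, Subtype.ext_iff]

lemma IsBridge.isAcyclic_fromEdgeSet_insert {s : Set (Sym2 V)} (hb : G.IsBridge e)
    (hs : s ⊆ G.edgeSet) (h : (fromEdgeSet s).IsAcyclic) :
    (fromEdgeSet (insert e s)).IsAcyclic := by
  induction e with | h u v
  have hle : fromEdgeSet (s \ {s(u, v)}) ≤ G.deleteEdges {s(u, v)} := by
    rw [← edgeSet_subset_edgeSet, edgeSet_deleteEdges, edgeSet_fromEdgeSet]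
    exact fun f hf => ⟨hs hf.1.1, hf.1.2⟩
  have hacyc := (h.anti (fromEdgeSet_mono Set.sdiff_subset)).sup_edge_of_not_reachable
    fun hr => hb (hr.mono hle)
  rwa [edge, ← fromEdgeSet_union, Set.sdiff_union_self, Set.union_singleton] at hacyc

lemma IsBridge.mem_of_isSpanningForest (hb : G.IsBridge e) (he : e ∈ G.edgeSet)
    {T : Set (Sym2 V)} (hT : G.IsSpanningForest T) : e ∈ T := by
  obtain ⟨hTG, hacyc, hmax⟩ := hT
  rw [← hmax (insert e T) (Set.subset_insert e T) (Set.insert_subset he hTG)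
    (hb.isAcyclic_fromEdgeSet_insert hTG hacyc)]
  exact Set.mem_insert e T

lemma subset_edgeSet_deleteEdges_singleton_iff {T : Set (Sym2 V)} :
    T ⊆ (G.deleteEdges {e}).edgeSet ↔ T ⊆ G.edgeSet ∧ e ∉ T := by
  rw [edgeSet_deleteEdges, Set.subset_sdiff, Set.disjoint_singleton_right]

lemma IsBridge.isSpanningForest_insert_iff (hb : G.IsBridge e) (he : e ∈ G.edgeSet)
    {T : Set (Sym2 V)} (heT : e ∉ T) :
    G.IsSpanningForest (insert e T) ↔ (G.deleteEdges {e}).IsSpanningForest T := by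
  simp only [IsSpanningForest, subset_edgeSet_deleteEdges_singleton_iff]
  constructor
  · rintro ⟨hTG, hacyc, hmax⟩
    have hTG' : T ⊆ G.edgeSet := (Set.subset_insert e T).trans hTG
    refine ⟨⟨hTG', heT⟩, hacyc.anti (fromEdgeSet_mono (Set.subset_insert e T)), ?_⟩
    rintro T' hTT' ⟨hT'G, heT'⟩ hacyc'
    have hT' := hmax (insert e T') (Set.insert_subset_insert hTT') (Set.insert_subset he hT'G)
      (hb.isAcyclic_fromEdgeSet_insert hT'G hacyc')
    rw [← Set.insert_sdiff_self_of_notMem heT', hT', Set.insert_sdiff_self_of_notMem heT]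
  · rintro ⟨⟨hTG, -⟩, hacyc, hmax⟩
    refine ⟨Set.insert_subset he hTG, hb.isAcyclic_fromEdgeSet_insert hTG hacyc, ?_⟩
    intro T' hTT' hT'G hacyc'
    have hT' := hmax (T' \ {e})
      (Set.subset_sdiff_singleton ((Set.subset_insert e T).trans hTT') heT)
      ⟨Set.sdiff_subset.trans hT'G, fun h => h.2 rfl⟩
      (hacyc'.anti (fromEdgeSet_mono Set.sdiff_subset))
    rw [← hT', Set.insert_sdiff_singleton, Set.insert_eq_of_mem (hTT' (Set.mem_insert e T))]

lemma ne_of_mem_edgeSet_deleteEdges_singleton {f : Sym2 V}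
    (hf : f ∈ (G.deleteEdges {e}).edgeSet) : f ≠ e := by
  rw [edgeSet_deleteEdges] at hf
  exact hf.2

lemma notMem_of_isSpanningForest_deleteEdges {T : Set (Sym2 V)}
    (hT : (G.deleteEdges {e}).IsSpanningForest T) : e ∉ T :=
  fun h => ne_of_mem_edgeSet_deleteEdges_singleton (hT.1 h) rfl

lemma rename_prod_X_deleteEdges_singleton {R : Type*} [CommSemiring R] [Fintype G.edgeSet]
    [Fintype (G.deleteEdges {e}).edgeSet] (T : Finset (Sym2 V)) :
    rename (G.deleteEdgesInc {e})
        (∏ f ∈ Finset.univ.filter fun f : (G.deleteEdges {e}).edgeSet => (f : Sym2 V) ∉ T,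
          (X f : MvPolynomial _ R)) =
      ∏ f ∈ Finset.univ.filter fun f : G.edgeSet => (f : Sym2 V) ∉ insert e T, X f := by
  rw [map_prod]
  refine Finset.prod_nbij (G.deleteEdgesInc {e}) ?_ (deleteEdgesInc_injective {e}).injOn ?_
    fun f _ => rename_X _ _
  · intro f hf
    have hfe := ne_of_mem_edgeSet_deleteEdges_singleton f.2
    simp_all [deleteEdgesInc]
  · intro f hf
    simp only [Finset.coe_filter, Finset.mem_univ, true_and, Finset.mem_insert, not_or,
      Set.mem_ofPred_eq] at hf
    refine ⟨⟨f, ?_⟩, by simpa using hf.2, rfl⟩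
    rw [edgeSet_deleteEdges]
    exact ⟨f.2, hf.1⟩

lemma IsBridge.kirchhoff_eq_rename [Fintype V] (hb : G.IsBridge e) (he : e ∈ G.edgeSet) :
    G.kirchhoff = rename (G.deleteEdgesInc {e}) (G.deleteEdges {e}).kirchhoff := by
  rw [kirchhoff, kirchhoff, map_sum]
  symm
  -- `convert` reconciles the `Fintype` instances on the edge sets
  refine Finset.sum_nbij' (insert e) (Finset.erase · e) ?_ ?_ ?_ ?_
    fun T _ => by convert rename_prod_X_deleteEdges_singleton T
  all_goals simp only [Finset.mem_filter, Finset.mem_univ, true_and]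
  · intro T hT
    rwa [Finset.coe_insert,
      hb.isSpanningForest_insert_iff he (notMem_of_isSpanningForest_deleteEdges hT)]
  · intro T hT
    have heT := hb.mem_of_isSpanningForest he hT
    rwa [Finset.coe_erase, ← hb.isSpanningForest_insert_iff he (fun h => h.2 rfl),
      Set.insert_sdiff_singleton, Set.insert_eq_of_mem heT]
  · exact fun T hT => Finset.erase_insert (notMem_of_isSpanningForest_deleteEdges hT)
  · exact fun T hT => Finset.insert_erase (hb.mem_of_isSpanningForest he hT)

end SimpleGraph

/-- Let `e` be a bridge of `G` and `G' = G` with `e` deleted. Then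
(a) every spanning forest of `G` contains `e`; (b) `Ψ_G` does not involve the variable
`x_e`, and equals the image of `Ψ_{G'}` under the renaming induced by
`E(G') = E(G) ∖ {e} ↪ E(G)`; and (c) `k^{E(G)} ∖ X̂_G ≃ k × (k^{E(G')} ∖ X̂_{G'})`. -/
theorem kirchhoff_bridge {V : Type*} [Fintype V] (G : SimpleGraph V) (e : Sym2 V)
    (he : e ∈ G.edgeSet ∧ G.IsBridge e) (k : Type*) [Field k] :
    (∀ T : Set (Sym2 V), G.IsSpanningForest T → e ∈ T) ∧
    (⟨e, he.1⟩ : G.edgeSet) ∉ G.kirchhoff.vars ∧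
    G.kirchhoff =
      MvPolynomial.rename (G.deleteEdgesInc {e}) (G.deleteEdges {e}).kirchhoff ∧
    Nonempty ((G.graphHypersurfaceComplement k) ≃
      k × ((G.deleteEdges {e}).graphHypersurfaceComplement k)) := by
  obtain ⟨he, hb⟩ := he
  have hrange := SimpleGraph.range_deleteEdgesInc_singleton he
  have hrename := hb.kirchhoff_eq_rename he
  refine ⟨fun T hT => hb.mem_of_isSpanningForest he hT, ?_, hrename, ?_⟩
  · rw [hrename]
    intro hvar
    obtain ⟨f, -, hf⟩ := mem_vars_rename _ _ hvar
    have hmem : (⟨e, he⟩ : G.edgeSet) ∈ Set.range (G.deleteEdgesInc {e}) := ⟨f, hf⟩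
    exact (hrange ▸ hmem) rfl
  · rw [SimpleGraph.graphHypersurfaceComplement, hrename]
    exact ⟨renameNonvanishingEquiv k (SimpleGraph.deleteEdgesInc_injective {e}) hrange _⟩
end
end

section
/- Let n ≥ 3 and let C_n be the cycle graph on n vertices (the simple graph on ZMod n in which i is adjacent to i+1 and i−1). Then the spanning forests of C_n are exactly the subsets of E(C_n) obtained by removing a single edge, so that Ψ_{C_n} = ∑_{e ∈ E(C_n)} x_e; consequently, for any field k, the complement of the affine graph hypersurface, {t : E(C_n) → k | ∑_e t_e ≠ 0}, is in bijection with k^{n−1} × kˣ. (This realizes the identity U(Γ) = [𝔸^n] − [𝔸^{n−1}] for an n-sided polygon.) -/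
open scoped Classical
noncomputable section

open MvPolynomial

/-- The cycle graph on `ZMod n`: `i` is adjacent to `i + 1` and `i - 1`. -/
def cycleGraphZMod (n : ℕ) : SimpleGraph (ZMod n) where
  Adj i j := i ≠ j ∧ (j = i + 1 ∨ i = j + 1)
  symm := by
    constructor
    rintro i j ⟨hne, h | h⟩
    · exact ⟨hne.symm, Or.inr h⟩
    · exact ⟨hne.symm, Or.inl h⟩
  loopless := ⟨fun i h => h.1 rfl⟩

/-!
Deleting an edge `s(a, a + 1)` from `C_n` leaves a connected graph with `n - 1` edges on `n`
vertices, hence a tree, while `C_n` itself is connected with `n` edges, hence not acyclic. So the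
maximal acyclic edge sets are exactly the edge sets with one edge removed, and `Ψ_{C_n}` is the
sum of the variables. Off the hypersurface, one coordinate is determined by the others and the
nonzero total sum.
-/

namespace SimpleGraph

variable {V : Type*} {G : SimpleGraph V}

lemma isSpanningForest_iff_exists_eq_diff_singleton (hG : ¬ G.IsAcyclic)
    (hdel : ∀ e ∈ G.edgeSet, (fromEdgeSet (G.edgeSet \ {e})).IsAcyclic) (T : Set (Sym2 V)) :
    G.IsSpanningForest T ↔ ∃ e ∈ G.edgeSet, T = G.edgeSet \ {e} := by
  have hE : ¬ (fromEdgeSet G.edgeSet).IsAcyclic := by rwa [fromEdgeSet_edgeSet]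
  constructor
  · rintro ⟨hTE, hT, hmax⟩
    obtain ⟨e, heE, heT⟩ : ∃ e ∈ G.edgeSet, e ∉ T :=
      Set.not_subset.mp fun h => hE (Set.Subset.antisymm hTE h ▸ hT)
    exact ⟨e, heE, (hmax _ (Set.subset_sdiff_singleton hTE heT) Set.sdiff_subset
      (hdel e heE)).symm⟩
  · rintro ⟨e, heE, rfl⟩
    refine ⟨Set.sdiff_subset, hdel e heE, fun T' hsub hT'E hT' => ?_⟩
    by_cases he : e ∈ T'
    · have : T' = G.edgeSet := Set.Subset.antisymm hT'E fun x hx => by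
        by_cases hxe : x = e
        · exact hxe ▸ he
        · exact hsub ⟨hx, hxe⟩
      exact (hE (this ▸ hT')).elim
    · exact Set.Subset.antisymm (Set.subset_sdiff_singleton hT'E he) hsub

lemma kirchhoff_eq_sum_X [Fintype V]
    (hG : ∀ T, G.IsSpanningForest T ↔ ∃ e ∈ G.edgeSet, T = G.edgeSet \ {e}) :
    G.kirchhoff = ∑ e : G.edgeSet, X e := by
  have hforests : Finset.univ.filter (fun T : Finset (Sym2 V) => G.IsSpanningForest ↑T)
      = Finset.univ.image (fun e : G.edgeSet => G.edgeFinset.erase ↑e) := by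
    ext T
    simp only [Finset.mem_filter, Finset.mem_univ, true_and, Finset.mem_image, hG,
      ← Finset.coe_inj, Finset.coe_erase, coe_edgeFinset, Subtype.exists, exists_prop, eq_comm]
  rw [kirchhoff, hforests, Finset.sum_image fun e _ e' _ h => Subtype.ext <|
    G.edgeFinset.erase_injOn (mem_edgeFinset.2 e.2) (mem_edgeFinset.2 e'.2) h]
  refine Finset.sum_congr rfl fun e _ => ?_
  have : Finset.univ.filter (fun e' : G.edgeSet => ↑e' ∉ G.edgeFinset.erase ↑e) = {e} := by
    ext e'
    simp [Subtype.ext_iff]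
  rw [this, Finset.prod_singleton]

end SimpleGraph

section SumNeZero

variable {k : Type*}

def sumNeZeroEquivOfEquiv [AddCommMonoid k] {ι ι' : Type*} [Fintype ι] [Fintype ι']
    (σ : ι ≃ ι') : {t : ι → k | ∑ i, t i ≠ 0} ≃ {t : ι' → k | ∑ i, t i ≠ 0} :=
  (σ.arrowCongr (Equiv.refl k)).subtypeEquiv fun t => by
    simp [σ.symm.sum_comp t]

def sumNeZeroOptionEquiv [DivisionRing k] {β : Type*} [Fintype β] :
    {t : Option β → k | ∑ i, t i ≠ 0} ≃ (β → k) × kˣ where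
  toFun t := (fun b => t.1 (some b), Units.mk0 _ t.2)
  invFun p := ⟨fun o => o.elim (p.2 - ∑ b, p.1 b) p.1, by simp [Fintype.sum_option]⟩
  left_inv t := Subtype.ext <| funext fun o => by cases o <;> simp [Fintype.sum_option]
  right_inv p := by ext <;> simp [Fintype.sum_option]

end SumNeZero

lemma ZMod.natCast_ne_zero_of_pos_of_lt {n m : ℕ} (h0 : 0 < m) (hm : m < n) :
    (m : ZMod n) ≠ 0 := fun h =>
  (Nat.le_of_dvd h0 ((ZMod.natCast_eq_zero_iff m n).1 h)).not_gt hm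

namespace cycleGraphZMod

open SimpleGraph

variable {n : ℕ}

lemma exists_eq_edge {e : Sym2 (ZMod n)} (he : e ∈ (cycleGraphZMod n).edgeSet) :
    ∃ i, e = s(i, i + 1) := by
  induction e using Sym2.ind with
  | _ a b =>
    rw [mem_edgeSet] at he
    obtain ⟨-, rfl | rfl⟩ := he
    · exact ⟨a, rfl⟩
    · exact ⟨b, Sym2.eq_swap⟩

lemma edge_mem (hn : 2 ≤ n) (i : ZMod n) : s(i, i + 1) ∈ (cycleGraphZMod n).edgeSet := by
  have h1 : ((1 : ℕ) : ZMod n) ≠ 0 := ZMod.natCast_ne_zero_of_pos_of_lt one_pos hn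
  refine ⟨fun h => h1 ?_, Or.inl rfl⟩
  push_cast
  linear_combination -h

lemma edge_injective (hn : 3 ≤ n) : Function.Injective fun i : ZMod n => s(i, i + 1) := by
  intro i j h
  rcases Sym2.eq_iff.1 h with ⟨hij, -⟩ | ⟨hij, hji⟩
  · exact hij
  · have h2 : ((2 : ℕ) : ZMod n) ≠ 0 := ZMod.natCast_ne_zero_of_pos_of_lt two_pos hn
    exact absurd (by push_cast; linear_combination hji - hij) h2

def edgeEquiv (hn : 3 ≤ n) : ZMod n ≃ (cycleGraphZMod n).edgeSet :=
  Equiv.ofBijective (fun i => ⟨s(i, i + 1), edge_mem (by omega) i⟩)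
    ⟨fun _ _ h => edge_injective hn (congrArg Subtype.val h), fun ⟨_, he⟩ =>
      (exists_eq_edge he).imp fun _ h => Subtype.ext h.symm⟩

lemma card_edgeSet (hn : 3 ≤ n) : Nat.card (cycleGraphZMod n).edgeSet = n := by
  rw [← Nat.card_congr (edgeEquiv hn), Nat.card_zmod]

lemma connected_fromEdgeSet_diff_singleton [NeZero n] (hn : 3 ≤ n) (a : ZMod n) :
    (fromEdgeSet ((cycleGraphZMod n).edgeSet \ {s(a, a + 1)})).Connected := by
  set H := fromEdgeSet ((cycleGraphZMod n).edgeSet \ {s(a, a + 1)})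
  have hadj (i : ZMod n) (hi : i ≠ a) : H.Adj i (i + 1) :=
    ⟨⟨edge_mem (by omega) i, fun h => hi (edge_injective hn h)⟩, (edge_mem (by omega) i).1⟩
  have hreach (m : ℕ) (hm : m < n) : H.Reachable (a + 1) (a + 1 + m) := by
    induction m with
    | zero => simp
    | succ m ih =>
      have hne : a + 1 + m ≠ a := fun h =>
        ZMod.natCast_ne_zero_of_pos_of_lt m.succ_pos hm (by push_cast; linear_combination h)
      simpa [add_assoc] using (ih (by omega)).trans (hadj _ hne).reachable
  have hreach_all (v : ZMod n) : H.Reachable (a + 1) v := by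
    simpa using hreach (v - (a + 1)).val (ZMod.val_lt _)
  exact ⟨fun u v => (hreach_all u).symm.trans (hreach_all v)⟩

lemma isTree_fromEdgeSet_diff_singleton [NeZero n] (hn : 3 ≤ n) (a : ZMod n) :
    (fromEdgeSet ((cycleGraphZMod n).edgeSet \ {s(a, a + 1)})).IsTree := by
  refine isTree_iff_connected_and_card.2 ⟨connected_fromEdgeSet_diff_singleton hn a, ?_⟩
  have hdiag : ((cycleGraphZMod n).edgeSet \ {s(a, a + 1)}) \ Sym2.diagSet =
      (cycleGraphZMod n).edgeSet \ {s(a, a + 1)} :=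
    sdiff_eq_left.2 <| Set.disjoint_of_subset_left Set.sdiff_subset <|
      Set.subset_compl_iff_disjoint_right.1 (edgeSet_subset_compl_diagSet _)
  rw [edgeSet_fromEdgeSet, hdiag, Nat.card_coe_set_eq,
    Set.ncard_sdiff_singleton_add_one (edge_mem (by omega) a), ← Nat.card_coe_set_eq,
    card_edgeSet hn, Nat.card_zmod]

lemma isAcyclic_fromEdgeSet_diff_singleton [NeZero n] (hn : 3 ≤ n) {e : Sym2 (ZMod n)}
    (he : e ∈ (cycleGraphZMod n).edgeSet) :
    (fromEdgeSet ((cycleGraphZMod n).edgeSet \ {e})).IsAcyclic := by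
  obtain ⟨a, rfl⟩ := exists_eq_edge he
  exact (isTree_fromEdgeSet_diff_singleton hn a).isAcyclic

lemma not_isAcyclic [NeZero n] (hn : 3 ≤ n) : ¬ (cycleGraphZMod n).IsAcyclic := fun h => by
  have hconn : (cycleGraphZMod n).Connected :=
    (connected_fromEdgeSet_diff_singleton hn 0).mono ((fromEdgeSet_le _).2 fun _ he => he.1.1)
  have hcard := (isTree_iff_connected_and_card.1 ⟨hconn, h⟩).2
  rw [card_edgeSet hn, Nat.card_zmod] at hcard
  omega

end cycleGraphZMod

/-- For `n ≥ 3` and the cycle graph `C_n` on `ZMod n`: the spanning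
forests of `C_n` are exactly the complements of single edges, so that
`Ψ_{C_n} = ∑_{e ∈ E(C_n)} x_e`; consequently, for any field `k`, the complement of the
affine graph hypersurface, `{t | ∑_e t_e ≠ 0}`, is in bijection with `k^{n−1} × kˣ`. -/
theorem cycleGraph_kirchhoff (n : ℕ) (hn : 3 ≤ n) [NeZero n] (k : Type*) [Field k] :
    (∀ T : Set (Sym2 (ZMod n)), (cycleGraphZMod n).IsSpanningForest T ↔
        ∃ e ∈ (cycleGraphZMod n).edgeSet, T = (cycleGraphZMod n).edgeSet \ {e}) ∧
    (cycleGraphZMod n).kirchhoff = ∑ e : (cycleGraphZMod n).edgeSet, MvPolynomial.X e ∧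
    Nonempty ({t : (cycleGraphZMod n).edgeSet → k | (∑ e, t e) ≠ 0} ≃
      (Fin (n - 1) → k) × kˣ) := by
  have hforest := SimpleGraph.isSpanningForest_iff_exists_eq_diff_singleton
    (cycleGraphZMod.not_isAcyclic hn) fun _ he =>
      cycleGraphZMod.isAcyclic_fromEdgeSet_diff_singleton hn he
  have hedges : (cycleGraphZMod n).edgeSet ≃ Option (Fin (n - 1)) :=
    (Finite.equivFinOfCardEq (by rw [cycleGraphZMod.card_edgeSet hn]; omega)).trans
      (finSuccEquiv (n - 1))
  exact ⟨hforest, SimpleGraph.kirchhoff_eq_sum_X hforest,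
    ⟨(sumNeZeroEquivOfEquiv hedges).trans sumNeZeroOptionEquiv⟩⟩
end
end
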